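/- arXiv:0710.4774 — 3 statements merged into one kernel-verified Lean document; each statement's English description precedes it below -/
import Mathlib

section
/- Let λ₁, λ₂, λ₃ ∈ ℂ∖{0}, and let N = (n₁,n₂,n₃) and M = (m₁,m₂,m₃) be vectors in ℕ³, each off the coordinate axes, which are linearly independent (over ℚ, viewing them in ℚ³) and which both satisfy the resonance relations λ₁n₁ + λ₂n₂ + λ₃n₃ = 0 and λ₁m₁ + λ₂m₂ + λ₃m₃ = 0. Then there exist integers a, b, c ∈ ℤ and λ ∈ ℂ∖{0} such that (λ₁,λ₂,λ₃) = λ·(a,b,c) and a·b·c < 0. -/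
/-!
Both resonance relations say that `λ` is orthogonal, for the bilinear dot product, to `N` and
`M`; hence `λ` is a complex multiple of the integer vector `N × M`, which is nonzero because
`N` and `M` are independent. As every `λᵢ` is nonzero, so is every entry of `N × M`, and
replacing the pair (multiplier, `N × M`) by its negative if necessary makes the product of the
entries negative.
-/

/-- A vector `N ∈ ℕ³` is off the coordinate axes if at least two of its
components are nonzero. -/
def OffAxes (N : Fin 3 → ℕ) : Prop :=
  (N 0 ≠ 0 ∧ N 1 ≠ 0) ∨ (N 0 ≠ 0 ∧ N 2 ≠ 0) ∨ (N 1 ≠ 0 ∧ N 2 ≠ 0)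

open Matrix

theorem RingHom.comp_cross {R S : Type*} [CommRing R] [CommRing S] (f : R →+* S)
    (u w : Fin 3 → R) : f ∘ (u ⨯₃ w) = (f ∘ u) ⨯₃ (f ∘ w) := by
  ext i
  fin_cases i <;> simp [cross_apply]

theorem exists_smul_cross_eq_of_dotProduct_eq_zero {F : Type*} [Field F] {u w v : Fin 3 → F}
    (huw : u ⨯₃ w ≠ 0) (hu : v ⬝ᵥ u = 0) (hw : v ⬝ᵥ w = 0) : ∃ a : F, a • (u ⨯₃ w) = v := by
  have hcross : (u ⨯₃ w) ⨯₃ v = 0 := by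
    rw [← cross_anticomm, cross_cross_eq_smul_sub_smul', hw, dotProduct_comm, hu]
    simp
  by_contra! hne
  exact (crossProduct_ne_zero_iff_linearIndependent.2
    ((LinearIndependent.pair_iff' huw).2 hne)) hcross

theorem exists_int_coords_prod_neg_of_eq_mul {R : Type*} [Ring R] {l : Fin 3 → R}
    (hl : ∀ i, l i ≠ 0) {z : Fin 3 → ℤ} {lam : R} (hz : ∀ i, l i = lam * z i) :
    ∃ (a b c : ℤ) (lam : R), lam ≠ 0 ∧
      l 0 = lam * a ∧ l 1 = lam * b ∧ l 2 = lam * c ∧ a * b * c < 0 := by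
  have hz0 : ∀ i, z i ≠ 0 := fun i h => hl i (by rw [hz i, h, Int.cast_zero, mul_zero])
  have hlam : lam ≠ 0 := fun h => hl 0 (by rw [hz 0, h, zero_mul])
  rcases (mul_ne_zero (mul_ne_zero (hz0 0) (hz0 1)) (hz0 2)).lt_or_gt with hneg | hpos
  · exact ⟨z 0, z 1, z 2, lam, hlam, hz 0, hz 1, hz 2, hneg⟩
  · refine ⟨-z 0, -z 1, -z 2, -lam, neg_ne_zero.2 hlam, ?_, ?_, ?_, by linarith⟩ <;>
      simp [hz]

theorem preparation_lemma_general (l₁ l₂ l₃ : ℂ) (hl₁ : l₁ ≠ 0) (hl₂ : l₂ ≠ 0) (hl₃ : l₃ ≠ 0)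
    (N M : Fin 3 → ℕ)
    (hindep : LinearIndependent ℚ ![(fun i => (N i : ℚ)), (fun i => (M i : ℚ))])
    (hresN : l₁ * N 0 + l₂ * N 1 + l₃ * N 2 = 0)
    (hresM : l₁ * M 0 + l₂ * M 1 + l₃ * M 2 = 0) :
    ∃ (a b c : ℤ) (lam : ℂ), lam ≠ 0 ∧
      l₁ = lam * a ∧ l₂ = lam * b ∧ l₃ = lam * c ∧ a * b * c < 0 := by
  set z : Fin 3 → ℤ := (fun i => (N i : ℤ)) ⨯₃ (fun i => (M i : ℤ))
  have cast_z (K : Type) [Field K] :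
      (Int.cast ∘ z : Fin 3 → K) = (fun i => (N i : K)) ⨯₃ (fun i => (M i : K)) := by
    convert (Int.castRingHom K).comp_cross _ _ <;> funext <;> simp
  have hz : z ≠ 0 := by
    rintro hz
    apply crossProduct_ne_zero_iff_linearIndependent.2 hindep
    rw [← cast_z, hz]
    rfl
  have hzℂ : (Int.cast ∘ z : Fin 3 → ℂ) ≠ 0 := by
    simpa using (Int.cast_injective.comp_left).ne hz
  obtain ⟨lam, hlam⟩ := exists_smul_cross_eq_of_dotProduct_eq_zero (v := ![l₁, l₂, l₃])
    (cast_z ℂ ▸ hzℂ) (by rw [vec3_dotProduct]; simpa using hresN)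
    (by rw [vec3_dotProduct]; simpa using hresM)
  rw [← cast_z] at hlam
  exact exists_int_coords_prod_neg_of_eq_mul (l := ![l₁, l₂, l₃])
    (fun i => by fin_cases i <;> simpa) (fun i => by rw [← hlam]; rfl)

/-- **Lemma (preparation).** If `λ₁, λ₂, λ₃` are nonzero complex numbers and
`N, M ∈ ℕ³ − C₃` are linearly independent over `ℚ` and both are resonances for
`(λ₁, λ₂, λ₃)`, then `(λ₁, λ₂, λ₃) = λ·(a, b, c)` for some nonzero `λ ∈ ℂ` and
integers `a, b, c` with `a·b·c < 0`. -/
theorem preparation_lemma (l₁ l₂ l₃ : ℂ) (hl₁ : l₁ ≠ 0) (hl₂ : l₂ ≠ 0) (hl₃ : l₃ ≠ 0)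
    (N M : Fin 3 → ℕ) (hN : OffAxes N) (hM : OffAxes M)
    (hindep : LinearIndependent ℚ ![(fun i => (N i : ℚ)), (fun i => (M i : ℚ))])
    (hresN : l₁ * N 0 + l₂ * N 1 + l₃ * N 2 = 0)
    (hresM : l₁ * M 0 + l₂ * M 1 + l₃ * M 2 = 0) :
    ∃ (a b c : ℤ) (lam : ℂ), lam ≠ 0 ∧
      l₁ = lam * a ∧ l₂ = lam * b ∧ l₃ = lam * c ∧ a * b * c < 0 :=
  preparation_lemma_general l₁ l₂ l₃ hl₁ hl₂ hl₃ N M hindep hresN hresM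
end

section
/- Let f be a polynomial in three variables over ℂ (an element of MvPolynomial (Fin 3) ℂ) and let λ₁, λ₂, λ₃ ∈ ℂ. If λ₁·x₁·∂f/∂x₁ + λ₂·x₂·∂f/∂x₂ + λ₃·x₃·∂f/∂x₃ = 0 (i.e. f is a first integral of the linear diagonal vector field with eigenvalues λ₁, λ₂, λ₃), then for every multi-index N = (n₁,n₂,n₃) with λ₁n₁ + λ₂n₂ + λ₃n₃ ≠ 0, the coefficient of x^N in f vanishes. In particular, in the absence of a resonance λ₁n₁ + λ₂n₂ + λ₃n₃ = 0 with N ≠ 0, the only such first integrals are constants. -/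
/-!
The derivation `f ↦ ∑ lᵢ xᵢ ∂f/∂xᵢ` is diagonal in the monomial basis: it multiplies `x^N` by
`∑ lᵢ nᵢ`. Hence it kills `f` exactly when `f` is supported on the resonant multi-indices, and
without nontrivial resonances only `N = 0` survives.
-/

open MvPolynomial

namespace MvPolynomial

variable {R σ : Type*} [CommSemiring R]

theorem coeff_X_mul_pderiv (i : σ) (N : σ →₀ ℕ) (f : MvPolynomial σ R) :
    coeff N (X i * pderiv i f) = N i * coeff N f := by
  classical
  induction f using MvPolynomial.induction_on' with
  | monomial s a =>
    rw [X_mul_pderiv_monomial, coeff_smul, coeff_monomial]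
    split_ifs with h
    · rw [h, nsmul_eq_mul]
    · rw [smul_zero, mul_zero]
  | add p q hp hq => simp only [mul_add, map_add, coeff_add, hp, hq]

theorem coeff_sum_C_mul_X_mul_pderiv [Fintype σ] (l : σ → R) (N : σ →₀ ℕ)
    (f : MvPolynomial σ R) :
    coeff N (∑ i, C (l i) * X i * pderiv i f) = (∑ i, l i * N i) * coeff N f := by
  simp only [coeff_sum, mul_assoc, coeff_C_mul, coeff_X_mul_pderiv, Finset.sum_mul]

theorem eq_C_coeff_zero_of_coeff_eq_zero {f : MvPolynomial σ R}
    (h : ∀ N, N ≠ 0 → coeff N f = 0) : f = C (coeff 0 f) := by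
  classical
  ext N
  rw [coeff_C]
  split_ifs with hN
  · rw [hN]
  · exact h N (Ne.symm hN)

end MvPolynomial

/-- If `f ∈ ℂ[x₁,x₂,x₃]` is a first integral of the linear diagonal vector
field with eigenvalues `λ₁, λ₂, λ₃`, i.e.
`λ₁x₁∂f/∂x₁ + λ₂x₂∂f/∂x₂ + λ₃x₃∂f/∂x₃ = 0`, then the coefficient of `x^N` in
`f` vanishes for every multi-index `N` with `λ₁n₁ + λ₂n₂ + λ₃n₃ ≠ 0`.  In
particular, in the absence of a nontrivial resonance, the only such first
integrals are the constants. -/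
theorem coeff_eq_zero_of_first_integral (f : MvPolynomial (Fin 3) ℂ) (l₁ l₂ l₃ : ℂ)
    (hf : C l₁ * X 0 * pderiv 0 f + C l₂ * X 1 * pderiv 1 f + C l₃ * X 2 * pderiv 2 f = 0) :
    (∀ N : Fin 3 →₀ ℕ, l₁ * N 0 + l₂ * N 1 + l₃ * N 2 ≠ 0 →
        MvPolynomial.coeff N f = 0) ∧
    ((∀ N : Fin 3 →₀ ℕ, N ≠ 0 → l₁ * N 0 + l₂ * N 1 + l₃ * N 2 ≠ 0) →
        ∃ c : ℂ, f = C c) := by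
  have hcoeff (N : Fin 3 →₀ ℕ) : (l₁ * N 0 + l₂ * N 1 + l₃ * N 2) * coeff N f = 0 := by
    have h := coeff_sum_C_mul_X_mul_pderiv ![l₁, l₂, l₃] N f
    simp only [Fin.sum_univ_three, Matrix.cons_val_zero, Matrix.cons_val_one,
      Matrix.cons_val_two, Matrix.head_cons, Matrix.tail_cons] at h
    rwa [hf, coeff_zero, eq_comm] at h
  have hres (N : Fin 3 →₀ ℕ) (hN : l₁ * N 0 + l₂ * N 1 + l₃ * N 2 ≠ 0) : coeff N f = 0 :=
    (mul_eq_zero.mp (hcoeff N)).resolve_left hN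
  exact ⟨hres, fun hnonres =>
    ⟨_, eq_C_coeff_zero_of_coeff_eq_zero fun N hN => hres N (hnonres N hN)⟩⟩
end

section
/- Let m, n, k be positive integers and let P = (p₁,p₂,p₃), Q = (q₁,q₂,q₃) ∈ ℕ³ be linearly independent over ℚ and satisfy p₁m + p₂n − p₃k = 0 and q₁m + q₂n − q₃k = 0. Then (p₁q₃ − p₃q₁)·(p₂q₃ − p₃q₂) < 0. (This is the key computation showing that x^{q₃·P}/x^{p₃·Q} — with the exponent q₃P − p₃Q having both a positive and a negative component among its first two entries — yields an invariant meromorphic function adapted to the z-axis.) -/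
/-- If `m, n, k` are positive integers and `P, Q ∈ ℕ³` are linearly independent
over `ℚ` and satisfy the resonance relations `p₁m + p₂n − p₃k = 0` and
`q₁m + q₂n − q₃k = 0`, then `(p₁q₃ − p₃q₁)·(p₂q₃ − p₃q₂) < 0`. -/
theorem adapted_meromorphic_key_inequality (m n k : ℕ) (hm : 0 < m) (hn : 0 < n) (hk : 0 < k)
    (P Q : Fin 3 → ℕ)
    (hindep : LinearIndependent ℚ ![(fun i => (P i : ℚ)), (fun i => (Q i : ℚ))])
    (hresP : (P 0 : ℤ) * m + (P 1 : ℤ) * n - (P 2 : ℤ) * k = 0)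
    (hresQ : (Q 0 : ℤ) * m + (Q 1 : ℤ) * n - (Q 2 : ℤ) * k = 0) :
    ((P 0 : ℤ) * Q 2 - (P 2 : ℤ) * Q 0) * ((P 1 : ℤ) * Q 2 - (P 2 : ℤ) * Q 1) < 0 := by
  have hA : ((P 0 : ℤ) * Q 2 - (P 2 : ℤ) * Q 0) * k
      = n * ((P 0 : ℤ) * Q 1 - (P 1 : ℤ) * Q 0) := by
    linear_combination (Q 0 : ℤ) * hresP - (P 0 : ℤ) * hresQ
  have hB : ((P 1 : ℤ) * Q 2 - (P 2 : ℤ) * Q 1) * k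
      = -((m : ℤ) * ((P 0 : ℤ) * Q 1 - (P 1 : ℤ) * Q 0)) := by
    linear_combination (Q 1 : ℤ) * hresP - (P 1 : ℤ) * hresQ
  have hkz : (0:ℤ) < k := by exact_mod_cast hk
  have hmz : (0:ℤ) < m := by exact_mod_cast hm
  have hnz : (0:ℤ) < n := by exact_mod_cast hn
  have hD : (P 0 : ℤ) * Q 1 - (P 1 : ℤ) * Q 0 ≠ 0 := by
    intro hD0
    have hA0 : (P 0 : ℤ) * Q 2 - (P 2 : ℤ) * Q 0 = 0 := by
      have h : ((P 0 : ℤ) * Q 2 - (P 2 : ℤ) * Q 0) * k = 0 := by rw [hA, hD0, mul_zero]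
      exact (mul_eq_zero.mp h).resolve_right hkz.ne'
    have hB0 : (P 1 : ℤ) * Q 2 - (P 2 : ℤ) * Q 1 = 0 := by
      have h : ((P 1 : ℤ) * Q 2 - (P 2 : ℤ) * Q 1) * k = 0 := by
        rw [hB, hD0, mul_zero, neg_zero]
      exact (mul_eq_zero.mp h).resolve_right hkz.ne'
    have minor : ∀ i j : Fin 3, (Q i : ℤ) * P j - (P i : ℤ) * Q j = 0 := by
      intro i j
      fin_cases i <;> fin_cases j <;>
        simp only [Fin.isValue, Fin.mk_zero, Fin.mk_one, Fin.reduceFinMk] <;>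
        linarith [hA0, hB0, hD0]
    have key := LinearIndependent.pair_iff.mp hindep
    have hPne : (fun i => (P i : ℚ)) ≠ 0 := by
      have := hindep.ne_zero 0
      simpa using this
    obtain ⟨i, hi⟩ := Function.ne_iff.mp hPne
    have hrel : (Q i : ℚ) • (fun j => (P j : ℚ)) + (-(P i : ℚ)) • (fun j => (Q j : ℚ)) = 0 := by
      funext j
      have h1 := minor i j
      have h2 : (Q i : ℚ) * P j - (P i : ℚ) * Q j = 0 := by exact_mod_cast h1
      simp only [Pi.add_apply, Pi.smul_apply, smul_eq_mul, Pi.zero_apply]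
      linarith
    have h3 := (key (Q i) (-(P i)) hrel).2
    have h4 : (P i : ℚ) = 0 := by linarith [neg_eq_zero.mp h3]
    exact hi h4
  have hAB : (((P 0 : ℤ) * Q 2 - (P 2 : ℤ) * Q 0) * ((P 1 : ℤ) * Q 2 - (P 2 : ℤ) * Q 1))
      * ((k : ℤ) * k)
      = -(((m : ℤ) * n) * (((P 0 : ℤ) * Q 1 - (P 1 : ℤ) * Q 0)
        * ((P 0 : ℤ) * Q 1 - (P 1 : ℤ) * Q 0))) := by
    linear_combination (((P 1 : ℤ) * Q 2 - (P 2 : ℤ) * Q 1) * k) * hA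
      + ((n : ℤ) * ((P 0 : ℤ) * Q 1 - (P 1 : ℤ) * Q 0)) * hB
  nlinarith [hAB, mul_pos hkz hkz, mul_pos (mul_pos hmz hnz) (mul_self_pos.mpr hD)]
end
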